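/- Let A be a graded-commutative superalgebra over a field of characteristic not 2, and let J be a homogeneous ideal of A. Then √J := { x ∈ A : x^n ∈ J for some n ∈ N } is a homogeneous ideal of A, and √J = √(J ∩ R) ⊕ A_0^odd ⊕ A_1^ev, where R = A_0^ev ⊕ A_1^odd and √(J ∩ R) is the radical of the ideal J ∩ R in the commutative ring R. Moreover, A/√J is a reduced commutative ring. -/

import Mathlib

/-- A graded-commutative graded superalgebra over `k`: a `ℤ × ZMod 2`-graded
`k`-algebra satisfying the sign rule `ab = (-1)^(|a|·|b| + deg a · deg b) ba`
for homogeneous elements. -/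
structure GradedSuperalgebra (k A : Type) [Field k] [Ring A] [Algebra k A] where
  grading : ℤ × ZMod 2 → Submodule k A
  one_mem : (1 : A) ∈ grading (0, 0)
  mul_mem : ∀ {i j : ℤ × ZMod 2} {a b : A},
    a ∈ grading i → b ∈ grading j → a * b ∈ grading (i + j)
  internal : DirectSum.IsInternal grading
  comm : ∀ {m n : ℤ} {s t : ZMod 2} {a b : A}, a ∈ grading (m, s) → b ∈ grading (n, t) →
    a * b = ((-1 : k) ^ ((s * t).val + (m * n).natAbs)) • (b * a)

namespace GradedSuperalgebra

variable {k A : Type} [Field k] [Ring A] [Algebra k A] (GS : GradedSuperalgebra k A)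

/-- The sum of the graded pieces whose index satisfies a predicate. -/
def piece (P : ℤ × ZMod 2 → Prop) : Submodule k A :=
  ⨆ p : {p : ℤ × ZMod 2 // P p}, GS.grading p

/-- `R = A₀ᵉᵛ ⊕ A₁ᵒᵈᵈ`: even ℤ-degree with parity `0` together with odd ℤ-degree
with parity `1`; an ordinary-commutative subalgebra of `A`. -/
def Rsub : Submodule k A :=
  GS.piece fun p => (Even p.1 ∧ p.2 = 0) ∨ (Odd p.1 ∧ p.2 = 1)

/-- `A₀ᵉᵛ`: even ℤ-degree, parity `0`. -/
def A0ev : Submodule k A := GS.piece fun p => Even p.1 ∧ p.2 = 0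

/-- `A₁ᵒᵈᵈ`: odd ℤ-degree, parity `1`. -/
def A1odd : Submodule k A := GS.piece fun p => Odd p.1 ∧ p.2 = 1

/-- `A₀ᵒᵈᵈ`: odd ℤ-degree, parity `0`. -/
def A0odd : Submodule k A := GS.piece fun p => Odd p.1 ∧ p.2 = 0

/-- `A₁ᵉᵛ`: even ℤ-degree, parity `1`. -/
def A1ev : Submodule k A := GS.piece fun p => Even p.1 ∧ p.2 = 1

/-- A submodule of `A` is homogeneous if it is spanned by its homogeneous elements. -/
def IsHomogeneous (I : Submodule k A) : Prop :=
  I = Submodule.span k {x : A | x ∈ I ∧ ∃ p, x ∈ GS.grading p}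

end GradedSuperalgebra

/-!
Let `R` and `N = A₀ᵒᵈᵈ ⊕ A₁ᵉᵛ` be the parts of even and odd total parity `|a| + deg a`, and let
`θ` be the algebra automorphism acting by `(-1)^|a|` on homogeneous elements. The sign rule makes
`R` commutative and gives `z r = θ(r) z` and `z w = -θ(w) θ(z)` for `r ∈ R` and `z, w ∈ N`. Taking
`w = θ(z)` and using `2 ≠ 0` yields `z θ(z) = 0`, hence `(z w)² = 0`: products of two elements of
`N` are nilpotent elements of `R`, and `K = √(J ∩ R) ⊕ N` is a two-sided ideal.

If `yᵐ ∈ J` with `y ∈ R` and `z ∈ N`, then `(y + z)ᵗ` is a sum of monomials `yⁱ θ(y)ʲ zˡ` with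
`i + j + l = t`; since `θ` preserves the homogeneous ideal `J` and `z⁴ = 0`, all of them lie in
`J` for `t = 2m + 4`, so `K ⊆ √J`. Conversely, if `xⁿ ∈ J` and `x = r + z` with `r ∈ R`, `z ∈ N`,
then `xⁿ - rⁿ ∈ K`; projecting onto `R` writes `rⁿ` as an element of `J ∩ R` plus an element of
`√(J ∩ R)`, so `r ∈ √(J ∩ R)` and `x ∈ K`. Homogeneity of `√(J ∩ R)` is the usual argument for
commutative graded rings: the top component of `sⁿ` is the `n`-th power of the top component
of `s`.
-/

section SemiconjBinomial

variable {S : Type*} [Ring S]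

theorem add_pow_mem_closure_of_semiconjBy {a b c : S} (hab : Commute a b)
    (hca : SemiconjBy c a b) (hcb : SemiconjBy c b a) (t : ℕ) :
    (a + c) ^ t ∈
      AddSubmonoid.closure {x | ∃ i j l, i + j + l = t ∧ x = a ^ i * b ^ j * c ^ l} := by
  induction t generalizing a b with
  | zero => exact AddSubmonoid.subset_closure ⟨0, 0, 0, rfl, by simp⟩
  | succ t ih =>
    -- `c (a + c) = (b + c) c`, so the induction hypothesis is also needed with `a` and `b` swapped
    have hsplit : (a + c) ^ (t + 1) = a * (a + c) ^ t + (b + c) ^ t * c := by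
      rw [pow_succ', add_mul, (hca.add_right (Commute.refl c)).pow_right]
    have hmap : ∀ (f : S →+ S) {s s' : Set S}, (∀ x ∈ s, f x ∈ s') →
        ∀ y ∈ AddSubmonoid.closure s, f y ∈ AddSubmonoid.closure s' := fun f s s' h y hy =>
      (AddSubmonoid.closure_le (S := (AddSubmonoid.closure s').comap f)).2
        (fun x hx => AddSubmonoid.subset_closure (h x hx)) hy
    rw [hsplit]
    refine add_mem (hmap (AddMonoidHom.mulLeft a) ?_ _ (ih hab hca hcb))
      (hmap (AddMonoidHom.mulRight c) ?_ _ (ih hab.symm hcb hca))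
    · rintro _ ⟨i, j, l, rfl, rfl⟩
      exact ⟨i + 1, j, l, by omega, by simp only [AddMonoidHom.coe_mulLeft, pow_succ', mul_assoc]⟩
    · rintro _ ⟨i, j, l, rfl, rfl⟩
      refine ⟨j, i, l + 1, by omega, ?_⟩
      simp only [AddMonoidHom.coe_mulRight, pow_succ, mul_assoc, (hab.pow_pow j i).eq]

theorem TwoSidedIdeal.add_pow_mem_of_semiconjBy (I : TwoSidedIdeal S) {a b c : S}
    (hab : Commute a b) (hca : SemiconjBy c a b) (hcb : SemiconjBy c b a) {m n : ℕ}
    (ha : a ^ m ∈ I) (hb : b ^ m ∈ I) (hc : c ^ n ∈ I) : (a + c) ^ (2 * m + n) ∈ I := by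
  refine AddSubmonoid.closure_induction (fun x hx => ?_) I.zero_mem (fun _ _ _ _ => I.add_mem)
    (add_pow_mem_closure_of_semiconjBy hab hca hcb _)
  obtain ⟨i, j, l, hijl, rfl⟩ := hx
  obtain hi | hj | hl : m ≤ i ∨ m ≤ j ∨ n ≤ l := by omega
  · rw [← pow_sub_mul_pow a hi, mul_assoc, mul_assoc]
    exact I.mul_mem_left _ _ (I.mul_mem_right _ _ ha)
  · rw [← pow_sub_mul_pow b hj, ← mul_assoc, mul_assoc]
    exact I.mul_mem_left _ _ (I.mul_mem_right _ _ hb)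
  · rw [← pow_sub_mul_pow c hl, ← mul_assoc]
    exact I.mul_mem_left _ _ hc

theorem TwoSidedIdeal.pow_sub_pow_mem (I : TwoSidedIdeal S) {x y : S} (h : x - y ∈ I) (n : ℕ) :
    x ^ n - y ^ n ∈ I := by
  induction n with
  | zero => simp [I.zero_mem]
  | succ n ih =>
    rw [show x ^ (n + 1) - y ^ (n + 1) = x ^ n * (x - y) + (x ^ n - y ^ n) * y by noncomm_ring]
    exact I.add_mem (I.mul_mem_left _ _ h) (I.mul_mem_right _ _ ih)

end SemiconjBinomial

namespace Submodule

variable {R S : Type*} [Ring R] [Ring S] [Module R S]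

def toTwoSidedIdeal (J : Submodule R S) (hJ : ∀ a : S, ∀ x ∈ J, a * x ∈ J ∧ x * a ∈ J) :
    TwoSidedIdeal S :=
  .mk' J J.zero_mem J.add_mem J.neg_mem (fun hy => (hJ _ _ hy).1) (fun hx => (hJ _ _ hx).2)

@[simp] lemma mem_toTwoSidedIdeal {J : Submodule R S}
    {hJ : ∀ a : S, ∀ x ∈ J, a * x ∈ J ∧ x * a ∈ J} {x : S} :
    x ∈ J.toTwoSidedIdeal hJ ↔ x ∈ J :=
  TwoSidedIdeal.mem_mk' _ _ _ _ _ _ x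

end Submodule

namespace GradedSuperalgebra

open DirectSum

variable {k A : Type} [Field k] [Ring A] [Algebra k A] (GS : GradedSuperalgebra k A)

noncomputable instance decomposition : Decomposition GS.grading :=
  GS.internal.chooseDecomposition

instance gradedMonoid : SetLike.GradedMonoid GS.grading where
  one_mem := GS.one_mem
  mul_mem _ _ _ _ := GS.mul_mem

/-! ### Sums of graded pieces -/

lemma grading_le_piece {P : ℤ × ZMod 2 → Prop} {p : ℤ × ZMod 2} (hp : P p) :
    GS.grading p ≤ GS.piece P :=
  le_iSup (fun q : {q // P q} => GS.grading q) ⟨p, hp⟩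

lemma piece_mono {P Q : ℤ × ZMod 2 → Prop} (h : ∀ p, P p → Q p) : GS.piece P ≤ GS.piece Q :=
  iSup_le fun p => GS.grading_le_piece (h p p.2)

lemma piece_congr {P Q : ℤ × ZMod 2 → Prop} (h : ∀ p, P p ↔ Q p) : GS.piece P = GS.piece Q :=
  congrArg GS.piece (funext fun p => propext (h p))

lemma piece_or (P Q : ℤ × ZMod 2 → Prop) :
    GS.piece (fun p => P p ∨ Q p) = GS.piece P ⊔ GS.piece Q :=
  le_antisymm
    (iSup_le fun p => p.2.elim (fun hP => (GS.grading_le_piece hP).trans le_sup_left)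
      (fun hQ => (GS.grading_le_piece hQ).trans le_sup_right))
    (sup_le (GS.piece_mono fun _ => Or.inl) (GS.piece_mono fun _ => Or.inr))

lemma mem_piece_iff {P : ℤ × ZMod 2 → Prop} {x : A} :
    x ∈ GS.piece P ↔ ∀ p, ¬ P p → (decompose GS.grading x p : A) = 0 := by
  constructor
  · intro hx p hp
    induction hx using Submodule.iSup_induction' with
    | mem q y hy => exact decompose_of_mem_ne GS.grading hy fun h => hp (h ▸ q.2)
    | zero => simp
    | add y z _ _ hy hz => simp [hy, hz]
  · classical
    intro h
    rw [← sum_support_decompose GS.grading x]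
    refine Submodule.sum_mem _ fun p _ => ?_
    by_cases hP : P p
    · exact GS.grading_le_piece hP (decompose GS.grading x p).2
    · simp [h p hP]

lemma mem_piece_true (x : A) : x ∈ GS.piece fun _ => True :=
  GS.mem_piece_iff.2 fun _ h => absurd trivial h

lemma ext_decompose {x y : A}
    (h : ∀ p, (decompose GS.grading x p : A) = decompose GS.grading y p) : x = y :=
  (decompose GS.grading).injective (DFinsupp.ext fun p => Subtype.ext (h p))

lemma exists_mem_piece_Ico (x : A) :
    ∃ L : ℤ, ∃ n : ℕ, x ∈ GS.piece fun q => L ≤ q.1 ∧ q.1 < L + n := by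
  classical
  set B := (decompose GS.grading x).support.sup fun q => q.1.natAbs
  refine ⟨-B, 2 * B + 1, GS.mem_piece_iff.2 fun q hq => ?_⟩
  have : q ∉ (decompose GS.grading x).support := fun hmem =>
    hq (by have := Finset.le_sup (f := fun q => q.1.natAbs) hmem; omega)
  simpa using DFinsupp.notMem_support_iff.1 this

lemma mul_mem_piece {P Q R : ℤ × ZMod 2 → Prop} (h : ∀ p q, P p → Q q → R (p + q)) {x y : A}
    (hx : x ∈ GS.piece P) (hy : y ∈ GS.piece Q) : x * y ∈ GS.piece R := by
  have hle : GS.piece P * GS.piece Q ≤ GS.piece R := by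
    simp only [piece, Submodule.iSup_mul, Submodule.mul_iSup]
    exact iSup_le fun q => iSup_le fun p => Submodule.mul_le.2 fun x hx y hy =>
      GS.grading_le_piece (h p q p.2 q.2) (GS.mul_mem hx hy)
  exact hle (Submodule.mul_mem_mul hx hy)

lemma bilinear_eq_of_mem_piece {M : Type*} [AddCommGroup M] [Module k M]
    (F G : A →ₗ[k] A →ₗ[k] M) {P Q : ℤ × ZMod 2 → Prop}
    (h : ∀ p q, P p → Q q → ∀ x ∈ GS.grading p, ∀ y ∈ GS.grading q, F x y = G x y)
    {x y : A} (hx : x ∈ GS.piece P) (hy : y ∈ GS.piece Q) : F x y = G x y := by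
  have hQ : ∀ p, P p → ∀ x ∈ GS.grading p, GS.piece Q ≤ LinearMap.eqLocus (F x) (G x) :=
    fun p hp x hx => iSup_le fun q y hy => h p q hp q.2 x hx y hy
  have hP : GS.piece P ≤ LinearMap.eqLocus (F.compl₂ (GS.piece Q).subtype)
      (G.compl₂ (GS.piece Q).subtype) :=
    iSup_le fun p x hx => LinearMap.ext fun y => hQ p p.2 x hx y.2
  exact LinearMap.congr_fun (hP hx) ⟨y, hy⟩

/-! ### Rescaling homogeneous components -/

noncomputable def twist (χ : ℤ × ZMod 2 → k) : A →ₗ[k] A :=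
  (decomposeLinearEquiv GS.grading).symm.toLinearMap ∘ₗ lmap (fun p => χ p • LinearMap.id) ∘ₗ
    (decomposeLinearEquiv GS.grading).toLinearMap

@[simp] lemma decompose_twist (χ : ℤ × ZMod 2 → k) (x : A) (p : ℤ × ZMod 2) :
    (decompose GS.grading (GS.twist χ x) p : A) = χ p • (decompose GS.grading x p : A) := by
  simp only [twist, LinearMap.comp_apply, LinearEquiv.coe_toLinearMap]
  rw [← decomposeLinearEquiv_apply, LinearEquiv.apply_symm_apply]
  simp [lmap, DFinsupp.mapRange.linearMap, decomposeLinearEquiv_apply]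

lemma twist_eq_smul_of_mem_piece {χ : ℤ × ZMod 2 → k} {P : ℤ × ZMod 2 → Prop} {c : k} {x : A}
    (hx : x ∈ GS.piece P) (h : ∀ p, P p → χ p = c) : GS.twist χ x = c • x := by
  refine GS.ext_decompose fun p => ?_
  rw [decompose_twist, decompose_smul, DFinsupp.coe_smul, Pi.smul_apply, Submodule.coe_smul]
  by_cases hp : P p
  · rw [h p hp]
  · simp [GS.mem_piece_iff.1 hx p hp]

lemma twist_of_mem (χ : ℤ × ZMod 2 → k) {p : ℤ × ZMod 2} {x : A} (hx : x ∈ GS.grading p) :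
    GS.twist χ x = χ p • x :=
  GS.twist_eq_smul_of_mem_piece (GS.grading_le_piece (P := (· = p)) rfl hx) fun _ h => h ▸ rfl

lemma twist_mem_piece {χ : ℤ × ZMod 2 → k} {P : ℤ × ZMod 2 → Prop} (h : ∀ p, ¬ P p → χ p = 0)
    (x : A) : GS.twist χ x ∈ GS.piece P :=
  GS.mem_piece_iff.2 fun p hp => by rw [decompose_twist, h p hp, zero_smul]

variable {GS} in
lemma IsHomogeneous.twist_mem {M : Submodule k A} (hM : GS.IsHomogeneous M)
    (χ : ℤ × ZMod 2 → k) {x : A} (hx : x ∈ M) : GS.twist χ x ∈ M := by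
  rw [hM] at hx ⊢
  induction hx using Submodule.span_induction with
  | mem y hy =>
    obtain ⟨hyM, p, hyp⟩ := hy
    rw [GS.twist_of_mem χ hyp]
    exact Submodule.smul_mem _ _ (Submodule.subset_span ⟨hyM, p, hyp⟩)
  | zero => simp
  | add y z _ _ hy hz => simpa using add_mem hy hz
  | smul c y _ hy => simpa using Submodule.smul_mem _ c hy

lemma twist_mul {χ : ℤ × ZMod 2 → k} (hχ : ∀ p q, χ (p + q) = χ p * χ q) (x y : A) :
    GS.twist χ (x * y) = GS.twist χ x * GS.twist χ y :=
  GS.bilinear_eq_of_mem_piece ((LinearMap.mul k A).compr₂ (GS.twist χ))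
    ((LinearMap.mul k A).compl₁₂ (GS.twist χ) (GS.twist χ))
    (fun p q _ _ x hx y hy => by
      simp only [LinearMap.compr₂_apply, LinearMap.compl₁₂_apply, LinearMap.mul_apply']
      rw [GS.twist_of_mem χ (GS.mul_mem hx hy), GS.twist_of_mem χ hx, GS.twist_of_mem χ hy, hχ,
        smul_mul_smul_comm, mul_smul])
    (GS.mem_piece_true x) (GS.mem_piece_true y)

/-! ### The sign rule -/

variable (k) in
def zsign (a : ZMod 2) : k := (-1) ^ a.val

@[simp] lemma zsign_zero : zsign k 0 = 1 := by rw [zsign, ZMod.val_zero, pow_zero]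

@[simp] lemma zsign_one : zsign k 1 = -1 := by rw [zsign, ZMod.val_one, pow_one]

lemma zsign_add (a b : ZMod 2) : zsign k (a + b) = zsign k a * zsign k b := by
  rw [zsign, zsign, zsign, ZMod.val_add, ← neg_one_pow_eq_pow_mod_two, pow_add]

lemma neg_one_pow_eq_zsign (s t : ZMod 2) (m n : ℤ) :
    (-1 : k) ^ ((s * t).val + (m * n).natAbs) = zsign k (s * t + (m * n : ℤ)) := by
  have h : (((s * t).val + (m * n).natAbs : ℕ) : ZMod 2) = s * t + (m * n : ℤ) := by
    push_cast [ZMod.natCast_val, ZMod.cast_id', id, ZMod.natAbs_mod_two]; rfl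
  rw [zsign, ← h, ZMod.val_natCast, ← neg_one_pow_eq_pow_mod_two]

lemma mul_eq_zsign_smul_mul {p q : ℤ × ZMod 2} {x y : A} (hx : x ∈ GS.grading p)
    (hy : y ∈ GS.grading q) : x * y = zsign k (p.2 * q.2 + (p.1 * q.1 : ℤ)) • (y * x) := by
  rw [GS.comm (m := p.1) (n := q.1) (s := p.2) (t := q.2) hx hy, neg_one_pow_eq_zsign]

def superParity (p : ℤ × ZMod 2) : ZMod 2 := p.1 + p.2

lemma koszul_eq (p q : ℤ × ZMod 2) : p.2 * q.2 + ((p.1 * q.1 : ℤ) : ZMod 2) =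
    superParity p * superParity q + superParity p * q.1 + p.1 * superParity q := by
  rw [superParity, superParity, Int.cast_mul]
  generalize (p.1 : ZMod 2) = a, (q.1 : ZMod 2) = b, p.2 = s, q.2 = t
  revert a b s t
  decide

def superPart (ε : ZMod 2) : Submodule k A := GS.piece fun p => superParity p = ε

lemma Rsub_eq_superPart : GS.Rsub = GS.superPart 0 := by
  refine GS.piece_congr fun p => ?_
  rw [superParity, ← ZMod.intCast_eq_zero_iff_even, ← ZMod.intCast_eq_one_iff_odd]
  generalize (p.1 : ZMod 2) = a, p.2 = s
  revert a s
  decide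

lemma A0odd_sup_A1ev_eq_superPart : GS.A0odd ⊔ GS.A1ev = GS.superPart 1 := by
  rw [A0odd, A1ev, ← piece_or]
  refine GS.piece_congr fun p => ?_
  rw [superParity, ← ZMod.intCast_eq_zero_iff_even, ← ZMod.intCast_eq_one_iff_odd]
  generalize (p.1 : ZMod 2) = a, p.2 = s
  revert a s
  decide

lemma mul_mem_superPart {ε δ : ZMod 2} {x y : A} (hx : x ∈ GS.superPart ε)
    (hy : y ∈ GS.superPart δ) : x * y ∈ GS.superPart (ε + δ) :=
  GS.mul_mem_piece (fun p q hp hq => by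
    rw [← hp, ← hq, superParity, superParity, superParity, Prod.fst_add, Prod.snd_add]
    push_cast; ring) hx hy

lemma one_mem_superPart_zero : (1 : A) ∈ GS.superPart 0 :=
  GS.grading_le_piece (show superParity (0 : ℤ × ZMod 2) = 0 from rfl) GS.one_mem

lemma pow_mem_superPart_zero {x : A} (hx : x ∈ GS.superPart 0) (n : ℕ) :
    x ^ n ∈ GS.superPart 0 := by
  induction n with
  | zero => simpa using GS.one_mem_superPart_zero
  | succ n ih => simpa [pow_succ] using GS.mul_mem_superPart ih hx

noncomputable def projR : A →ₗ[k] A := GS.twist fun p => if superParity p = 0 then 1 else 0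

lemma projR_mem (x : A) : GS.projR x ∈ GS.superPart 0 :=
  GS.twist_mem_piece (fun _ hp => if_neg hp) x

lemma sub_projR_mem (x : A) : x - GS.projR x ∈ GS.superPart 1 :=
  GS.mem_piece_iff.2 fun p hp => by
    have hp0 : superParity p = 0 := by revert hp; generalize superParity p = a; revert a; decide
    simp [projR, hp0]

lemma projR_eq_self {x : A} (hx : x ∈ GS.superPart 0) : GS.projR x = x := by
  simpa [projR] using GS.twist_eq_smul_of_mem_piece hx (c := 1) fun _ hp => if_pos hp

lemma projR_eq_zero {x : A} (hx : x ∈ GS.superPart 1) : GS.projR x = 0 := by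
  simpa [projR] using
    GS.twist_eq_smul_of_mem_piece hx (c := 0) fun _ hp => if_neg (by rw [hp]; decide)

noncomputable def theta : A →ₗ[k] A := GS.twist fun p => zsign k p.1

lemma theta_of_mem {p : ℤ × ZMod 2} {x : A} (hx : x ∈ GS.grading p) :
    GS.theta x = zsign k p.1 • x :=
  GS.twist_of_mem _ hx

lemma theta_mul (x y : A) : GS.theta (x * y) = GS.theta x * GS.theta y :=
  GS.twist_mul (fun p q => by rw [Prod.fst_add, Int.cast_add, zsign_add]) x y

lemma theta_pow (x : A) (n : ℕ) : GS.theta (x ^ n) = GS.theta x ^ n := by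
  induction n with
  | zero => simpa using GS.theta_of_mem GS.one_mem
  | succ n ih => rw [pow_succ, theta_mul, ih, pow_succ]

lemma theta_theta (x : A) : GS.theta (GS.theta x) = x :=
  GS.ext_decompose fun p => by
    rw [theta, decompose_twist, decompose_twist, smul_smul, ← zsign_add,
      CharTwo.add_self_eq_zero, zsign_zero, one_smul]

lemma theta_mem_superPart {ε : ZMod 2} {x : A} (hx : x ∈ GS.superPart ε) :
    GS.theta x ∈ GS.superPart ε :=
  GS.mem_piece_iff.2 fun p hp => by
    rw [theta, decompose_twist, GS.mem_piece_iff.1 hx p hp, smul_zero]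

lemma commute_of_mem_superPart_zero {x y : A} (hx : x ∈ GS.superPart 0)
    (hy : y ∈ GS.superPart 0) : Commute x y :=
  GS.bilinear_eq_of_mem_piece (LinearMap.mul k A) (LinearMap.mul k A).flip
    (fun p q hp hq x hx y hy => by
      simp only [LinearMap.mul_apply', LinearMap.flip_apply]
      rw [GS.mul_eq_zsign_smul_mul hx hy, koszul_eq, hp, hq]
      simp) hx hy

lemma mul_eq_theta_mul {z r : A} (hz : z ∈ GS.superPart 1) (hr : r ∈ GS.superPart 0) :
    z * r = GS.theta r * z :=
  GS.bilinear_eq_of_mem_piece (LinearMap.mul k A) ((LinearMap.mul k A).flip.compl₂ GS.theta)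
    (fun p q hp hq z hz r hr => by
      simp only [LinearMap.mul_apply', LinearMap.compl₂_apply, LinearMap.flip_apply]
      rw [GS.mul_eq_zsign_smul_mul hz hr, koszul_eq, hp, hq, GS.theta_of_mem hr, smul_mul_assoc]
      simp) hz hr

lemma mul_eq_neg_theta_mul_theta {z w : A} (hz : z ∈ GS.superPart 1) (hw : w ∈ GS.superPart 1) :
    z * w = -(GS.theta w * GS.theta z) :=
  GS.bilinear_eq_of_mem_piece (LinearMap.mul k A)
    (-(LinearMap.mul k A).flip.compl₁₂ GS.theta GS.theta)
    (fun p q hp hq z hz w hw => by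
      simp only [LinearMap.mul_apply', LinearMap.neg_apply, LinearMap.compl₁₂_apply,
        LinearMap.flip_apply]
      rw [GS.mul_eq_zsign_smul_mul hz hw, koszul_eq, hp, hq, GS.theta_of_mem hz,
        GS.theta_of_mem hw, smul_mul_smul_comm, one_mul, one_mul, zsign_add, zsign_add, zsign_one,
        ← neg_smul]
      ring_nf) hz hw

lemma mul_theta_self_eq_zero (h2 : (2 : k) ≠ 0) {z : A} (hz : z ∈ GS.superPart 1) :
    z * GS.theta z = 0 := by
  have h := GS.mul_eq_neg_theta_mul_theta hz (GS.theta_mem_superPart hz)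
  rw [theta_theta] at h
  have h' : (2 : k) • (z * GS.theta z) = 0 := by
    rw [two_smul]; nth_rewrite 2 [h]; exact add_neg_cancel _
  exact (smul_eq_zero.1 h').resolve_left h2

lemma mul_sq_eq_zero (h2 : (2 : k) ≠ 0) {z w : A} (hz : z ∈ GS.superPart 1)
    (hw : w ∈ GS.superPart 1) : (z * w) ^ 2 = 0 := by
  rw [sq, mul_assoc, ← mul_assoc w, GS.mul_eq_neg_theta_mul_theta hw hz, neg_mul, mul_neg,
    mul_assoc, ← mul_assoc z, GS.mul_theta_self_eq_zero h2 hz, zero_mul, neg_zero]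

lemma pow_four_eq_zero (h2 : (2 : k) ≠ 0) {z : A} (hz : z ∈ GS.superPart 1) : z ^ 4 = 0 := by
  rw [show 4 = 2 * 2 from rfl, pow_mul, sq z, GS.mul_sq_eq_zero h2 hz hz]

/-! ### Top-degree components -/

lemma pow_mem_piece_le {d : ℤ} {x : A} (hx : x ∈ GS.piece fun q => q.1 ≤ d) (n : ℕ) :
    x ^ n ∈ GS.piece fun q => q.1 ≤ n * d := by
  induction n with
  | zero =>
    simpa using GS.grading_le_piece (P := fun q => q.1 ≤ 0)
      (show (0 : ℤ × ZMod 2).1 ≤ 0 from le_rfl) GS.one_mem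
  | succ n ih =>
    rw [pow_succ]
    exact GS.mul_mem_piece (fun p q hp hq => by simp only [Prod.fst_add]; push_cast; linarith) ih hx

lemma pow_sub_pow_mem_piece_lt {d : ℤ} {s y : A} (hy : y ∈ GS.piece fun q => q.1 ≤ d)
    (hsy : s - y ∈ GS.piece fun q => q.1 < d) (n : ℕ) :
    s ^ n - y ^ n ∈ GS.piece fun q => q.1 < n * d := by
  have hs : s ∈ GS.piece fun q => q.1 ≤ d := by
    simpa using add_mem hy (GS.piece_mono (fun q hq => le_of_lt hq) hsy)
  induction n with
  | zero => simp
  | succ n ih =>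
    rw [show s ^ (n + 1) - y ^ (n + 1) = s ^ n * (s - y) + (s ^ n - y ^ n) * y by noncomm_ring]
    exact add_mem
      (GS.mul_mem_piece (fun p q hp hq => by simp only [Prod.fst_add]; push_cast; linarith)
        (GS.pow_mem_piece_le hs n) hsy)
      (GS.mul_mem_piece (fun p q hp hq => by simp only [Prod.fst_add]; push_cast; linarith) ih hy)

variable {GS} in
lemma IsHomogeneous.top_pow_mem {J : Submodule k A} (hJhom : GS.IsHomogeneous J)
    {p : ℤ × ZMod 2} {s y : A} (hy : y ∈ GS.grading p)
    (hsy : s - y ∈ GS.piece fun q => q.1 < p.1) {n : ℕ} (hs : s ^ n ∈ J) : y ^ n ∈ J := by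
  set χ : ℤ × ZMod 2 → k := fun q => if q.1 < n * p.1 then 0 else 1
  have h1 : GS.twist χ (y ^ n) = y ^ n := by
    simpa [χ] using GS.twist_of_mem χ (SetLike.pow_mem_graded n hy)
  have h2 : GS.twist χ (s ^ n - y ^ n) = 0 := by
    simpa using GS.twist_eq_smul_of_mem_piece (c := 0)
      (GS.pow_sub_pow_mem_piece_lt
        (GS.grading_le_piece (P := fun q => q.1 ≤ p.1) (show p.1 ≤ p.1 from le_rfl) hy) hsy n)
      fun q hq => if_pos hq
  have := hJhom.twist_mem χ hs
  rwa [← sub_add_cancel (s ^ n) (y ^ n), map_add, h1, h2, zero_add] at this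

/-! ### The radical -/

section Radical

variable (J : Submodule k A) (hJ : ∀ a : A, ∀ x ∈ J, a * x ∈ J ∧ x * a ∈ J)

def radicalR : Submodule k A where
  carrier := {x | x ∈ GS.superPart 0 ∧ ∃ n : ℕ, x ^ n ∈ J}
  add_mem' := by
    rintro x y ⟨hx, m, hxm⟩ ⟨hy, n, hyn⟩
    have hyx := GS.commute_of_mem_superPart_zero hy hx
    refine ⟨add_mem hx hy, 2 * m + n, ?_⟩
    simpa using (J.toTwoSidedIdeal hJ).add_pow_mem_of_semiconjBy (Commute.refl x) hyx hyx
      (by simpa using hxm) (by simpa using hxm) (by simpa using hyn)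
  zero_mem' := ⟨zero_mem _, 1, by simp⟩
  smul_mem' c x := fun ⟨hx, n, hxn⟩ => ⟨Submodule.smul_mem _ c hx, n, by
    rw [smul_pow]; exact J.smul_mem _ hxn⟩

def radical : Submodule k A := GS.radicalR J hJ ⊔ GS.superPart 1

variable {J hJ}

lemma radicalR_le_radical : GS.radicalR J hJ ≤ GS.radical J hJ := le_sup_left

lemma superPart_one_le_radical : GS.superPart 1 ≤ GS.radical J hJ := le_sup_right

lemma mul_mem_radicalR_of_mem_superPart_zero {r y : A} (hr : r ∈ GS.superPart 0)
    (hy : y ∈ GS.radicalR J hJ) : r * y ∈ GS.radicalR J hJ := by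
  obtain ⟨hy, n, hyn⟩ := hy
  refine ⟨by simpa using GS.mul_mem_superPart hr hy, n, ?_⟩
  rw [(GS.commute_of_mem_superPart_zero hr hy).mul_pow]
  exact (hJ _ _ hyn).1

lemma mul_mem_radicalR_of_mem_superPart_one (h2 : (2 : k) ≠ 0) {z w : A}
    (hz : z ∈ GS.superPart 1) (hw : w ∈ GS.superPart 1) : z * w ∈ GS.radicalR J hJ :=
  ⟨CharTwo.add_self_eq_zero (1 : ZMod 2) ▸ GS.mul_mem_superPart hz hw, 2, by
    rw [GS.mul_sq_eq_zero h2 hz hw]; exact J.zero_mem⟩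

lemma exists_superPart_decomposition (a : A) :
    ∃ a₀ ∈ GS.superPart 0, ∃ a₁ ∈ GS.superPart 1, a₀ + a₁ = a :=
  ⟨_, GS.projR_mem a, _, GS.sub_projR_mem a, add_sub_cancel _ _⟩

lemma mul_mem_radical (h2 : (2 : k) ≠ 0) (a : A) {x : A} (hx : x ∈ GS.radical J hJ) :
    a * x ∈ GS.radical J hJ ∧ x * a ∈ GS.radical J hJ := by
  obtain ⟨y, hy, z, hz, rfl⟩ := Submodule.mem_sup.1 hx
  obtain ⟨a₀, ha₀, a₁, ha₁, rfl⟩ := GS.exists_superPart_decomposition a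
  have hR {u : A} (hu : u ∈ GS.radicalR J hJ) := GS.radicalR_le_radical hu
  have hN {u : A} (hu : u ∈ GS.superPart 1) := GS.superPart_one_le_radical (hJ := hJ) hu
  simp only [add_mul, mul_add]
  refine ⟨add_mem (add_mem ?_ ?_) (add_mem ?_ ?_), add_mem (add_mem ?_ ?_) (add_mem ?_ ?_)⟩
  · exact hR (GS.mul_mem_radicalR_of_mem_superPart_zero ha₀ hy)
  · exact hN (by simpa using GS.mul_mem_superPart ha₁ hy.1)
  · exact hN (by simpa using GS.mul_mem_superPart ha₀ hz)
  · exact hR (GS.mul_mem_radicalR_of_mem_superPart_one h2 ha₁ hz)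
  · rw [(GS.commute_of_mem_superPart_zero hy.1 ha₀).eq]
    exact hR (GS.mul_mem_radicalR_of_mem_superPart_zero ha₀ hy)
  · exact hN (by simpa using GS.mul_mem_superPart hz ha₀)
  · exact hN (by simpa using GS.mul_mem_superPart hy.1 ha₁)
  · exact hR (GS.mul_mem_radicalR_of_mem_superPart_one h2 hz ha₁)

lemma commutator_mem_radical (h2 : (2 : k) ≠ 0) (a b : A) :
    a * b - b * a ∈ GS.radical J hJ := by
  obtain ⟨a₀, ha₀, a₁, ha₁, rfl⟩ := GS.exists_superPart_decomposition a
  obtain ⟨b₀, hb₀, b₁, hb₁, rfl⟩ := GS.exists_superPart_decomposition b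
  rw [show (a₀ + a₁) * (b₀ + b₁) - (b₀ + b₁) * (a₀ + a₁) = (a₀ * b₀ - b₀ * a₀) +
    (a₀ * b₁ - b₁ * a₀ + (a₁ * b₀ - b₀ * a₁)) + (a₁ * b₁ - b₁ * a₁) by noncomm_ring,
    (GS.commute_of_mem_superPart_zero ha₀ hb₀).eq, sub_self, zero_add]
  refine add_mem (GS.superPart_one_le_radical (add_mem (sub_mem ?_ ?_) (sub_mem ?_ ?_)))
    (GS.radicalR_le_radical (sub_mem (GS.mul_mem_radicalR_of_mem_superPart_one h2 ha₁ hb₁)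
      (GS.mul_mem_radicalR_of_mem_superPart_one h2 hb₁ ha₁)))
  · simpa using GS.mul_mem_superPart ha₀ hb₁
  · simpa using GS.mul_mem_superPart hb₁ ha₀
  · simpa using GS.mul_mem_superPart ha₁ hb₀
  · simpa using GS.mul_mem_superPart hb₀ ha₁

lemma exists_pow_mem_of_mem_radical (h2 : (2 : k) ≠ 0) (hJhom : GS.IsHomogeneous J) {x : A}
    (hx : x ∈ GS.radical J hJ) : ∃ n : ℕ, x ^ n ∈ J := by
  obtain ⟨y, ⟨hy, m, hym⟩, z, hz, rfl⟩ := Submodule.mem_sup.1 hx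
  have hθy := GS.theta_mem_superPart hy
  have hθym : GS.theta (y ^ m) ∈ J := hJhom.twist_mem _ hym
  rw [theta_pow] at hθym
  refine ⟨2 * m + 4, ?_⟩
  simpa using (J.toTwoSidedIdeal hJ).add_pow_mem_of_semiconjBy
    (GS.commute_of_mem_superPart_zero hy hθy) (GS.mul_eq_theta_mul hz hy)
    (by rw [SemiconjBy, GS.mul_eq_theta_mul hz hθy, theta_theta]) (by simpa using hym)
    (by simpa using hθym) (by simp [GS.pow_four_eq_zero h2 hz])

lemma projR_mem_radicalR {x : A} (hx : x ∈ GS.radical J hJ) :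
    GS.projR x ∈ GS.radicalR J hJ := by
  obtain ⟨y, hy, z, hz, rfl⟩ := Submodule.mem_sup.1 hx
  rwa [map_add, GS.projR_eq_self hy.1, GS.projR_eq_zero hz, add_zero]

lemma mem_radical_of_pow_mem (h2 : (2 : k) ≠ 0) (hJhom : GS.IsHomogeneous J) {x : A} {n : ℕ}
    (hx : x ^ n ∈ J) : x ∈ GS.radical J hJ := by
  set r := GS.projR x
  have hr : r ∈ GS.superPart 0 := GS.projR_mem x
  have hxr : x ^ n - r ^ n ∈ GS.radical J hJ := by
    simpa using ((GS.radical J hJ).toTwoSidedIdeal (GS.mul_mem_radical h2)).pow_sub_pow_mem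
      (by simpa using GS.superPart_one_le_radical (GS.sub_projR_mem x)) n
  have hprojR : GS.projR (x ^ n) - r ^ n ∈ GS.radicalR J hJ := by
    simpa [GS.projR_eq_self (GS.pow_mem_superPart_zero hr n)] using GS.projR_mem_radicalR hxr
  have hprojRJ : GS.projR (x ^ n) ∈ GS.radicalR J hJ :=
    ⟨GS.projR_mem _, 1, by simpa [projR] using hJhom.twist_mem _ hx⟩
  obtain ⟨-, m, hm⟩ : r ^ n ∈ GS.radicalR J hJ := by simpa using sub_mem hprojRJ hprojR
  have hrK : r ∈ GS.radicalR J hJ := ⟨hr, n * m, by rwa [pow_mul]⟩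
  rw [← add_sub_cancel r x]
  exact add_mem (GS.radicalR_le_radical hrK) (GS.superPart_one_le_radical (GS.sub_projR_mem x))

lemma radicalR_le_span_homogeneous (hJhom : GS.IsHomogeneous J) :
    GS.radicalR J hJ ≤ Submodule.span k {x | x ∈ GS.radicalR J hJ ∧ ∃ p, x ∈ GS.grading p} := by
  suffices H : ∀ (n : ℕ) (L : ℤ) (s : A), s ∈ GS.radicalR J hJ →
      (s ∈ GS.piece fun q => L ≤ q.1 ∧ q.1 < L + n) →
      s ∈ Submodule.span k {x | x ∈ GS.radicalR J hJ ∧ ∃ p, x ∈ GS.grading p} by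
    intro s hs
    obtain ⟨L, n, hsLn⟩ := GS.exists_mem_piece_Ico s
    exact H n L s hs hsLn
  intro n
  induction n with
  | zero =>
    intro L s _ hsLn
    have : s = 0 := GS.ext_decompose fun q => by simp [GS.mem_piece_iff.1 hsLn q (by omega)]
    simp [this]
  | succ n ih =>
    intro L s hs hsLn
    -- the only index of `ℤ`-degree `L + n` whose graded piece lies in `R`
    set p : ℤ × ZMod 2 := (L + n, ((L + n : ℤ) : ZMod 2))
    set y := (decompose GS.grading s p : A)
    have hy : y ∈ GS.grading p := (decompose GS.grading s p).2
    have hyR : y ∈ GS.superPart 0 :=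
      GS.grading_le_piece (show superParity p = 0 from CharTwo.add_self_eq_zero _) hy
    have hsy : s - y ∈ GS.piece fun q => L ≤ q.1 ∧ q.1 < L + n :=
      GS.mem_piece_iff.2 fun q hq => by
        rw [decompose_sub, DFinsupp.sub_apply, Submodule.coe_sub]
        by_cases hqp : q = p
        · rw [hqp, decompose_of_mem_same GS.grading hy, sub_self]
        rw [decompose_of_mem_ne GS.grading hy (Ne.symm hqp), sub_zero]
        have : ¬ (L ≤ q.1 ∧ q.1 < L + (n + 1 : ℕ)) ∨ ¬ superParity q = 0 := by
          by_contra! h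
          have hq1 : q.1 = L + n := by push_cast at h; omega
          refine hqp (Prod.ext hq1 ?_)
          rw [← neg_eq_of_add_eq_zero_right h.2, ZMod.neg_eq_self_mod_two, hq1]
        exact this.elim (GS.mem_piece_iff.1 hsLn q) (GS.mem_piece_iff.1 hs.1 q)
    obtain ⟨m, hm⟩ := hs.2
    have hyK : y ∈ GS.radicalR J hJ :=
      ⟨hyR, m, hJhom.top_pow_mem hy (GS.piece_mono (fun q hq => hq.2) hsy) hm⟩
    rw [← add_sub_cancel y s]
    exact add_mem (Submodule.subset_span ⟨hyK, p, hy⟩) (ih L (s - y) (sub_mem hs hyK) hsy)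

lemma isHomogeneous_radical (hJhom : GS.IsHomogeneous J) :
    GS.IsHomogeneous (GS.radical J hJ) := by
  refine le_antisymm (sup_le ?_ ?_) (Submodule.span_le.2 fun x hx => hx.1)
  · exact (GS.radicalR_le_span_homogeneous hJhom).trans
      (Submodule.span_mono fun x ⟨hx, p, hxp⟩ => ⟨GS.radicalR_le_radical hx, p, hxp⟩)
  · exact iSup_le fun p x hx =>
      Submodule.subset_span ⟨GS.superPart_one_le_radical (GS.grading_le_piece p.2 hx), p, hx⟩

end Radical

end GradedSuperalgebra

theorem statement3 {k A : Type} [Field k] [Ring A] [Algebra k A]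
    (h2 : (2 : k) ≠ 0) (GS : GradedSuperalgebra k A)
    (J : Submodule k A)
    (hJideal : ∀ a : A, ∀ x ∈ J, a * x ∈ J ∧ x * a ∈ J)
    (hJhom : GS.IsHomogeneous J) :
    ∃ K : Submodule k A,
      -- `K` is the radical `√J` of `J`
      ((K : Set A) = {x : A | ∃ n : ℕ, x ^ n ∈ J}) ∧
      -- `√J` is a two-sided ideal of `A`
      (∀ a : A, ∀ x ∈ K, a * x ∈ K ∧ x * a ∈ K) ∧
      -- `√J` is homogeneous
      GS.IsHomogeneous K ∧
      -- `√J = √(J ∩ R) ⊕ A₀ᵒᵈᵈ ⊕ A₁ᵉᵛ`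
      ((K : Set A) = {x : A | ∃ y z : A, y ∈ GS.Rsub ∧ (∃ n : ℕ, y ^ n ∈ J) ∧
        z ∈ GS.A0odd ⊔ GS.A1ev ∧ x = y + z}) ∧
      -- the quotient `A/√J` is commutative ...
      (∀ a b : A, a * b - b * a ∈ K) ∧
      -- ... and reduced
      (∀ x : A, ∀ n : ℕ, x ^ n ∈ K → x ∈ K) := by
  have hK : (GS.radical J hJideal : Set A) = {x | ∃ n : ℕ, x ^ n ∈ J} := Set.ext fun _ =>
    ⟨GS.exists_pow_mem_of_mem_radical h2 hJhom,
      fun ⟨_, hn⟩ => GS.mem_radical_of_pow_mem h2 hJhom hn⟩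
  refine ⟨GS.radical J hJideal, hK, fun a _ hx => GS.mul_mem_radical h2 a hx,
    GS.isHomogeneous_radical hJhom, ?_, GS.commutator_mem_radical h2, fun x n hx => ?_⟩
  · ext x
    rw [GS.Rsub_eq_superPart, GS.A0odd_sup_A1ev_eq_superPart]
    constructor
    · intro hx
      obtain ⟨y, ⟨hy, hyn⟩, z, hz, rfl⟩ := Submodule.mem_sup.1 hx
      exact ⟨y, z, hy, hyn, hz, rfl⟩
    · rintro ⟨y, z, hy, hyn, hz, rfl⟩
      exact Submodule.mem_sup.2 ⟨y, ⟨hy, hyn⟩, z, hz, rfl⟩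
  · obtain ⟨m, hm⟩ := GS.exists_pow_mem_of_mem_radical h2 hJhom hx
    exact GS.mem_radical_of_pow_mem h2 hJhom (n := n * m) (by rwa [pow_mul])
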